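/- Let S and P be unital complex *-algebras, let ω be a state on S and σ a state on P, and let Θ be a unital algebra automorphism of S⊗P that preserves the star operation (with (a⊗b)* = a*⊗b*). Let E ∈ P be positive, i.e., E = Σ_i λ_i b_i* b_i for finitely many b_i ∈ P and nonnegative reals λ_i. Then p := (ω⊗σ)(Θ(1⊗E)) is a nonnegative real number, and if p ≠ 0 the functional C ↦ p⁻¹ · (ω⊗σ)(Θ(C⊗E)) is a state on S. -/

import Mathlib

open scoped ComplexOrder TensorProduct

/-- The tensor product `ω ⊗ σ` of two linear functionals, determined by
`(ω ⊗ σ)(a ⊗ b) = ω a * σ b`. -/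
noncomputable def tensorFunctional {A B : Type*} [Ring A] [Algebra ℂ A]
    [Ring B] [Algebra ℂ B] (ω : A →ₗ[ℂ] ℂ) (σ : B →ₗ[ℂ] ℂ) :
    A ⊗[ℂ] B →ₗ[ℂ] ℂ :=
  (TensorProduct.lid ℂ ℂ).toLinearMap.comp (TensorProduct.map ω σ)

/-- The (unnormalised) selective update functional `C ↦ (ω ⊗ σ)(Θ (C ⊗ E))`. -/
noncomputable def selectiveUpdateAux {S P : Type*} [Ring S] [Algebra ℂ S]
    [Ring P] [Algebra ℂ P] (ω : S →ₗ[ℂ] ℂ) (σ : P →ₗ[ℂ] ℂ)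
    (Θ : (S ⊗[ℂ] P) ≃ₐ[ℂ] (S ⊗[ℂ] P)) (E : P) : S →ₗ[ℂ] ℂ :=
  (tensorFunctional ω σ).comp
    (Θ.toLinearMap.comp ((TensorProduct.mk ℂ S P).flip E))

/-! The product of two positive functionals is positive: expanding `x = ∑ aᵢ ⊗ bᵢ` gives
`(ω ⊗ σ)(x* x) = ∑ᵢⱼ ω(aᵢ* aⱼ) σ(bᵢ* bⱼ)`, the sum of the entries of the Hadamard product of two
positive semidefinite Gram matrices, which is nonnegative by the Schur product theorem. As `Θ` is a
`*`-homomorphism and `(C* C) ⊗ E = ∑ λᵢ (C ⊗ bᵢ)* (C ⊗ bᵢ)`, the functional `C ↦ (ω ⊗ σ)(Θ(C ⊗ E))`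
is then positive, and dividing it by its value `p` at `1` gives a state. -/

open scoped Matrix

namespace Matrix

variable {n : Type*} [Fintype n]

theorem isHermitian_of_forall_dotProduct_mulVec_nonneg [DecidableEq n] {A : Matrix n n ℂ}
    (hA : ∀ x, 0 ≤ star x ⬝ᵥ A *ᵥ x) : A.IsHermitian := by
  rw [← isSymmetric_toEuclideanLin_iff, LinearMap.isSymmetric_iff_inner_map_self_real]
  intro v
  rw [Complex.conj_eq_iff_im, ← inner_conj_symm, Complex.conj_im, neg_eq_zero,
    EuclideanSpace.inner_eq_star_dotProduct, dotProduct_comm]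
  exact (Complex.nonneg_iff.mp (hA v.ofLp)).2.symm

theorem posSemidef_of_forall_dotProduct_mulVec_nonneg {A : Matrix n n ℂ}
    (hA : ∀ x, 0 ≤ star x ⬝ᵥ A *ᵥ x) : A.PosSemidef := by
  classical
  exact .of_dotProduct_mulVec_nonneg (isHermitian_of_forall_dotProduct_mulVec_nonneg hA) hA

theorem PosSemidef.sum_entries_nonneg {R : Type*} [Ring R] [PartialOrder R] [StarRing R]
    {A : Matrix n n R} (hA : A.PosSemidef) : 0 ≤ ∑ i, ∑ j, A i j := by
  simpa [dotProduct, mulVec, Finset.mul_sum] using hA.dotProduct_mulVec_nonneg 1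

end Matrix

section Gram

variable {A : Type*} [Ring A] [Algebra ℂ A] [StarRing A] [StarModule ℂ A] {ι : Type*}

def gramMatrix (ω : A →ₗ[ℂ] ℂ) (a : ι → A) : Matrix ι ι ℂ :=
  Matrix.of fun i j => ω (star (a i) * a j)

theorem star_dotProduct_gramMatrix_mulVec [Fintype ι] (ω : A →ₗ[ℂ] ℂ) (a : ι → A) (v : ι → ℂ) :
    star v ⬝ᵥ gramMatrix ω a *ᵥ v = ω (star (∑ i, v i • a i) * ∑ i, v i • a i) := by
  rw [star_sum, Finset.sum_mul_sum]
  simp only [star_smul, smul_mul_smul_comm, map_sum, map_smul, smul_eq_mul, dotProduct,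
    Matrix.mulVec, gramMatrix, Matrix.of_apply, Finset.mul_sum, Pi.star_apply]
  exact Finset.sum_congr rfl fun i _ => Finset.sum_congr rfl fun j _ => by ring

theorem posSemidef_gramMatrix [Finite ι] {ω : A →ₗ[ℂ] ℂ} (hω : ∀ a, 0 ≤ ω (star a * a))
    (a : ι → A) : (gramMatrix ω a).PosSemidef := by
  have := Fintype.ofFinite ι
  exact Matrix.posSemidef_of_forall_dotProduct_mulVec_nonneg fun v =>
    star_dotProduct_gramMatrix_mulVec ω a v ▸ hω _

end Gram

section TensorProduct

variable {S P : Type*} [Ring S] [Algebra ℂ S] [Ring P] [Algebra ℂ P]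

@[simp]
theorem tensorFunctional_tmul (ω : S →ₗ[ℂ] ℂ) (σ : P →ₗ[ℂ] ℂ) (a : S) (b : P) :
    tensorFunctional ω σ (a ⊗ₜ b) = ω a * σ b := by
  simp [tensorFunctional]

theorem selectiveUpdateAux_apply (ω : S →ₗ[ℂ] ℂ) (σ : P →ₗ[ℂ] ℂ)
    (Θ : (S ⊗[ℂ] P) ≃ₐ[ℂ] (S ⊗[ℂ] P)) (E : P) (C : S) :
    selectiveUpdateAux ω σ Θ E C = tensorFunctional ω σ (Θ (C ⊗ₜ E)) :=
  rfl

variable [StarRing S] [StarModule ℂ S] [StarRing P] [StarModule ℂ P]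

theorem tensorFunctional_star_sum_mul_sum
    (ω : S →ₗ[ℂ] ℂ) (σ : P →ₗ[ℂ] ℂ) {ι : Type*} [Fintype ι] (a : ι → S) (b : ι → P) :
    tensorFunctional ω σ (star (∑ i, a i ⊗ₜ b i) * ∑ i, a i ⊗ₜ b i) =
      ∑ i, ∑ j, (gramMatrix ω a ⊙ gramMatrix σ b) i j := by
  simp only [star_sum, TensorProduct.star_tmul, Finset.sum_mul_sum,
    Algebra.TensorProduct.tmul_mul_tmul, map_sum, tensorFunctional_tmul,
    Matrix.hadamard_apply, gramMatrix, Matrix.of_apply]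

theorem tensorFunctional_star_mul_self_nonneg {ω : S →ₗ[ℂ] ℂ} (hω : ∀ a, 0 ≤ ω (star a * a))
    {σ : P →ₗ[ℂ] ℂ} (hσ : ∀ b, 0 ≤ σ (star b * b)) (x : S ⊗[ℂ] P) :
    0 ≤ tensorFunctional ω σ (star x * x) := by
  obtain ⟨s, rfl⟩ := TensorProduct.exists_finset x
  rw [← Finset.sum_coe_sort s, tensorFunctional_star_sum_mul_sum]
  exact ((posSemidef_gramMatrix hω _).hadamard (posSemidef_gramMatrix hσ _)).sum_entries_nonneg

theorem selectiveUpdateAux_star_mul_self_nonneg {ω : S →ₗ[ℂ] ℂ} (hω : ∀ a, 0 ≤ ω (star a * a))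
    {σ : P →ₗ[ℂ] ℂ} (hσ : ∀ b, 0 ≤ σ (star b * b)) {Θ : (S ⊗[ℂ] P) ≃ₐ[ℂ] (S ⊗[ℂ] P)}
    (hΘ : ∀ x, Θ (star x) = star (Θ x)) {ι : Type*} [Fintype ι] (b : ι → P) {lam : ι → ℝ}
    (hlam : ∀ i, 0 ≤ lam i) (C : S) :
    0 ≤ selectiveUpdateAux ω σ Θ (∑ i, (lam i : ℂ) • (star (b i) * b i)) (star C * C) := by
  have hsplit : (star C * C) ⊗ₜ[ℂ] (∑ i, (lam i : ℂ) • (star (b i) * b i)) =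
      ∑ i, (lam i : ℂ) • (star (C ⊗ₜ b i) * (C ⊗ₜ b i)) := by
    simp only [TensorProduct.tmul_sum, TensorProduct.tmul_smul, TensorProduct.star_tmul,
      Algebra.TensorProduct.tmul_mul_tmul]
  rw [selectiveUpdateAux_apply, hsplit]
  simp only [map_sum, map_smul, map_mul, hΘ, smul_eq_mul]
  exact Finset.sum_nonneg fun i _ =>
    mul_nonneg (Complex.zero_le_real.mpr (hlam i)) (tensorFunctional_star_mul_self_nonneg hω hσ _)

end TensorProduct

theorem selectiveUpdate_isState_general
    {S P : Type*} [Ring S] [Algebra ℂ S] [StarRing S] [StarModule ℂ S]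
    [Ring P] [Algebra ℂ P] [StarRing P] [StarModule ℂ P]
    (ω : S →ₗ[ℂ] ℂ) (hωpos : ∀ a : S, 0 ≤ ω (star a * a))
    (σ : P →ₗ[ℂ] ℂ) (hσpos : ∀ b : P, 0 ≤ σ (star b * b))
    (Θ : (S ⊗[ℂ] P) ≃ₐ[ℂ] (S ⊗[ℂ] P))
    (hΘstar : ∀ x : S ⊗[ℂ] P, Θ (star x) = star (Θ x))
    (E : P)
    (hE : ∃ (m : ℕ) (b : Fin m → P) (lam : Fin m → ℝ), (∀ i, 0 ≤ lam i) ∧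
      E = ∑ i : Fin m, (lam i : ℂ) • (star (b i) * b i)) :
    0 ≤ selectiveUpdateAux ω σ Θ E 1 ∧
    (selectiveUpdateAux ω σ Θ E 1 ≠ 0 →
      (selectiveUpdateAux ω σ Θ E 1)⁻¹ * selectiveUpdateAux ω σ Θ E 1 = 1 ∧
      ∀ C : S, 0 ≤ (selectiveUpdateAux ω σ Θ E 1)⁻¹ *
        selectiveUpdateAux ω σ Θ E (star C * C)) := by
  obtain ⟨m, b, lam, hlam, rfl⟩ := hE
  have hpos := selectiveUpdateAux_star_mul_self_nonneg hωpos hσpos hΘstar b hlam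
  have hp := hpos 1
  rw [star_one, one_mul] at hp
  exact ⟨hp, fun hne =>
    ⟨inv_mul_cancel₀ hne, fun C => mul_nonneg (inv_nonneg_of_nonneg hp) (hpos C)⟩⟩

/-- Let `ω`, `σ` be states on the unital complex `*`-algebras `S` and `P`, let
`Θ` be a unital star-preserving algebra automorphism of `S ⊗[ℂ] P` (with the
star determined by `(a ⊗ b)* = a* ⊗ b*`), and let `E ∈ P` be positive, i.e. a
finite sum `∑ i, λ i • (b i)* (b i)` with nonnegative real coefficients.  Then
the success probability `p := (ω ⊗ σ)(Θ (1 ⊗ E))` is a nonnegative real, and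
if `p ≠ 0` then `C ↦ p⁻¹ * (ω ⊗ σ)(Θ (C ⊗ E))` is a state on `S`. -/
theorem selectiveUpdate_isState
    {S P : Type*} [Ring S] [Algebra ℂ S] [StarRing S] [StarModule ℂ S]
    [Ring P] [Algebra ℂ P] [StarRing P] [StarModule ℂ P]
    [StarRing (S ⊗[ℂ] P)]
    (hstar : ∀ (a : S) (b : P), star (a ⊗ₜ[ℂ] b) = star a ⊗ₜ[ℂ] star b)
    (ω : S →ₗ[ℂ] ℂ) (hω1 : ω 1 = 1) (hωpos : ∀ a : S, 0 ≤ ω (star a * a))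
    (σ : P →ₗ[ℂ] ℂ) (hσ1 : σ 1 = 1) (hσpos : ∀ b : P, 0 ≤ σ (star b * b))
    (Θ : (S ⊗[ℂ] P) ≃ₐ[ℂ] (S ⊗[ℂ] P))
    (hΘstar : ∀ x : S ⊗[ℂ] P, Θ (star x) = star (Θ x))
    (E : P)
    (hE : ∃ (m : ℕ) (b : Fin m → P) (lam : Fin m → ℝ), (∀ i, 0 ≤ lam i) ∧
      E = ∑ i : Fin m, (lam i : ℂ) • (star (b i) * b i)) :
    0 ≤ selectiveUpdateAux ω σ Θ E 1 ∧
    (selectiveUpdateAux ω σ Θ E 1 ≠ 0 →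
      (selectiveUpdateAux ω σ Θ E 1)⁻¹ * selectiveUpdateAux ω σ Θ E 1 = 1 ∧
      ∀ C : S, 0 ≤ (selectiveUpdateAux ω σ Θ E 1)⁻¹ *
        selectiveUpdateAux ω σ Θ E (star C * C)) :=
  selectiveUpdate_isState_general ω hωpos σ hσpos Θ hΘstar E hE
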